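/- Let Γ ∈ ℝ^{d×d} be symmetric positive definite, y ∈ ℝᵈ, and F, \tilde{F} : ℝⁿ → ℝᵈ. For sample points m₁,…,m_N ∈ ℝⁿ, define π̂ = (1/N)∑_j exp(-(1/2)‖y - F(m_j)‖²_{Γ⁻¹}) and π̃ = (1/N)∑_j exp(-(1/2)‖y - \tilde{F}(m_j)‖²_{Γ⁻¹}). Then |π̂ - π̃| ≤ C · ( (1/N) ∑_j ‖F(m_j) - \tilde{F}(m_j)‖² )^{1/2}, where C = ‖Γ⁻¹‖ ( 2‖y‖ + ((1/N)∑_j ‖F(m_j)‖²)^{1/2} + ((1/N)∑_j ‖\tilde{F}(m_j)‖²)^{1/2} ) and ‖v‖²_{Γ⁻¹} := vᵀΓ⁻¹v. -/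

import Mathlib

/-! The Gaussian likelihood `u ↦ exp (-½ ‖y - u‖²_{Γ⁻¹})` is the exponential of a nonpositive
quadratic expression, and `exp` is `1`-Lipschitz on `(-∞, 0]`. Writing
`⟪a, A a⟫ - ⟪b, A b⟫ = ⟪a - b, A a⟫ + ⟪b, A (a - b)⟫` gives
`|⟪a, A a⟫ - ⟪b, A b⟫| ≤ ‖A‖ ‖a - b‖ (‖a‖ + ‖b‖)`, so each summand of `π̂ - π̃` is bounded by
`‖Γ⁻¹‖ ‖F mⱼ - F̃ mⱼ‖ (2‖y‖ + ‖F mⱼ‖ + ‖F̃ mⱼ‖)`, and Cauchy–Schwarz for empirical averages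
turns the average of these products into the product of root-mean-squares. -/

open scoped InnerProductSpace
open Finset

theorem Real.abs_exp_sub_exp_le_of_nonpos {x y : ℝ} (hx : x ≤ 0) (hy : y ≤ 0) :
    |Real.exp x - Real.exp y| ≤ |x - y| := by
  wlog hyx : y ≤ x generalizing x y
  · rw [abs_sub_comm, abs_sub_comm x]
    exact this hy hx (le_of_not_ge hyx)
  have hfactor : Real.exp x - Real.exp y = Real.exp x * (1 - Real.exp (y - x)) := by
    rw [mul_sub, ← Real.exp_add]
    ring_nf
  have hnonneg : 0 ≤ 1 - Real.exp (y - x) := sub_nonneg.2 (Real.exp_le_one_iff.2 (by linarith))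
  have hle : 1 - Real.exp (y - x) ≤ x - y := by linarith [Real.add_one_le_exp (y - x)]
  rw [hfactor, abs_of_nonneg (mul_nonneg (Real.exp_pos x).le hnonneg),
    abs_of_nonneg (sub_nonneg.2 hyx)]
  simpa using mul_le_mul (Real.exp_le_one_iff.2 hx) hle hnonneg zero_le_one

theorem ContinuousLinearMap.abs_inner_map_self_sub_inner_map_self_le {E : Type*}
    [NormedAddCommGroup E] [InnerProductSpace ℝ E] (A : E →L[ℝ] E) (a b : E) :
    |⟪a, A a⟫_ℝ - ⟪b, A b⟫_ℝ| ≤ ‖A‖ * (‖a - b‖ * (‖a‖ + ‖b‖)) := by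
  have hsplit : ⟪a, A a⟫_ℝ - ⟪b, A b⟫_ℝ = ⟪a - b, A a⟫_ℝ + ⟪b, A (a - b)⟫_ℝ := by
    rw [inner_sub_left, map_sub, inner_sub_right]
    ring
  calc |⟪a, A a⟫_ℝ - ⟪b, A b⟫_ℝ| ≤ ‖a - b‖ * ‖A a‖ + ‖b‖ * ‖A (a - b)‖ := by
        rw [hsplit]
        exact (abs_add_le _ _).trans
          (add_le_add (abs_real_inner_le_norm _ _) (abs_real_inner_le_norm _ _))
    _ ≤ ‖a - b‖ * (‖A‖ * ‖a‖) + ‖b‖ * (‖A‖ * ‖a - b‖) := by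
        gcongr <;> exact A.le_opNorm _
    _ = ‖A‖ * (‖a - b‖ * (‖a‖ + ‖b‖)) := by ring

theorem Matrix.PosSemidef.inner_toEuclideanCLM_self_nonneg {ι : Type*} [Fintype ι]
    [DecidableEq ι] {M : Matrix ι ι ℝ} (hM : M.PosSemidef) (x : EuclideanSpace ℝ ι) :
    0 ≤ ⟪x, Matrix.toEuclideanCLM (𝕜 := ℝ) M x⟫_ℝ := by
  simpa [Matrix.inner_toEuclideanCLM] using hM.dotProduct_mulVec_nonneg x.ofLp

noncomputable def gaussianLikelihood {E : Type*} [NormedAddCommGroup E] [InnerProductSpace ℝ E]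
    (A : E →L[ℝ] E) (y u : E) : ℝ :=
  Real.exp (-(1 / 2) * ⟪y - u, A (y - u)⟫_ℝ)

theorem abs_gaussianLikelihood_sub_le {E : Type*} [NormedAddCommGroup E] [InnerProductSpace ℝ E]
    (A : E →L[ℝ] E) (hA : ∀ v, 0 ≤ ⟪v, A v⟫_ℝ) (y u v : E) :
    |gaussianLikelihood A y u - gaussianLikelihood A y v| ≤
      ‖A‖ / 2 * (‖u - v‖ * (2 * ‖y‖ + ‖u‖ + ‖v‖)) := by
  have hsum : ‖y - u‖ + ‖y - v‖ ≤ 2 * ‖y‖ + ‖u‖ + ‖v‖ := by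
    linarith [norm_sub_le y u, norm_sub_le y v]
  have hquad := A.abs_inner_map_self_sub_inner_map_self_le (y - u) (y - v)
  rw [show (y - u) - (y - v) = v - u by abel, norm_sub_rev] at hquad
  calc |gaussianLikelihood A y u - gaussianLikelihood A y v|
      ≤ |-(1 / 2) * ⟪y - u, A (y - u)⟫_ℝ - -(1 / 2) * ⟪y - v, A (y - v)⟫_ℝ| :=
        Real.abs_exp_sub_exp_le_of_nonpos (by nlinarith [hA (y - u)]) (by nlinarith [hA (y - v)])
    _ = |⟪y - u, A (y - u)⟫_ℝ - ⟪y - v, A (y - v)⟫_ℝ| / 2 := by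
        rw [← mul_sub, abs_mul]
        norm_num
        ring
    _ ≤ ‖A‖ * (‖u - v‖ * (‖y - u‖ + ‖y - v‖)) / 2 := by
        gcongr
    _ ≤ ‖A‖ / 2 * (‖u - v‖ * (2 * ‖y‖ + ‖u‖ + ‖v‖)) := by
        rw [div_mul_eq_mul_div]
        gcongr

theorem Real.mul_sum_mul_le_sqrt_mul_sqrt {ι : Type*} {c : ℝ} (hc : 0 ≤ c) (s : Finset ι)
    (f g : ι → ℝ) :
    c * ∑ i ∈ s, f i * g i ≤ √(c * ∑ i ∈ s, f i ^ 2) * √(c * ∑ i ∈ s, g i ^ 2) := by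
  calc c * ∑ i ∈ s, f i * g i ≤ c * (√(∑ i ∈ s, f i ^ 2) * √(∑ i ∈ s, g i ^ 2)) := by
        gcongr
        exact Real.sum_mul_le_sqrt_mul_sqrt s f g
    _ = √(c * ∑ i ∈ s, f i ^ 2) * √(c * ∑ i ∈ s, g i ^ 2) := by
        rw [Real.sqrt_mul hc, Real.sqrt_mul hc, mul_mul_mul_comm, Real.mul_self_sqrt hc]

theorem Real.mul_sum_le_sqrt_mul_sum_sq {ι : Type*} {c : ℝ} (hc : 0 ≤ c) {s : Finset ι}
    (hcs : c * #s ≤ 1) (f : ι → ℝ) :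
    c * ∑ i ∈ s, f i ≤ √(c * ∑ i ∈ s, f i ^ 2) := by
  calc c * ∑ i ∈ s, f i = c * ∑ i ∈ s, f i * 1 := by simp only [mul_one]
    _ ≤ √(c * ∑ i ∈ s, f i ^ 2) * √(c * #s) := by
        simpa using Real.mul_sum_mul_le_sqrt_mul_sqrt hc s f 1
    _ ≤ √(c * ∑ i ∈ s, f i ^ 2) := by
        refine mul_le_of_le_one_right (Real.sqrt_nonneg _) ?_
        exact Real.sqrt_le_one.mpr hcs

theorem Real.mul_sum_mul_add_add_le {ι : Type*} {c r : ℝ} (hc : 0 ≤ c) (hr : 0 ≤ r)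
    {s : Finset ι} (hcs : c * #s ≤ 1) (e f g : ι → ℝ) :
    c * ∑ i ∈ s, e i * (r + f i + g i) ≤
      √(c * ∑ i ∈ s, e i ^ 2) * (r + √(c * ∑ i ∈ s, f i ^ 2) + √(c * ∑ i ∈ s, g i ^ 2)) := by
  have hexpand : c * ∑ i ∈ s, e i * (r + f i + g i) =
      r * (c * ∑ i ∈ s, e i) + c * ∑ i ∈ s, e i * f i + c * ∑ i ∈ s, e i * g i := by
    simp only [mul_sum, ← sum_add_distrib]
    exact sum_congr rfl fun i _ ↦ by ring
  rw [hexpand]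
  have := mul_le_mul_of_nonneg_left (Real.mul_sum_le_sqrt_mul_sum_sq hc hcs e) hr
  linarith [Real.mul_sum_mul_le_sqrt_mul_sqrt hc s e f, Real.mul_sum_mul_le_sqrt_mul_sqrt hc s e g]

theorem evidence_estimator_error_bound_general (n d N : ℕ)
    (Γ : Matrix (Fin d) (Fin d) ℝ) (hΓpd : Γ.PosDef)
    (y : EuclideanSpace ℝ (Fin d))
    (F Ft : EuclideanSpace ℝ (Fin n) → EuclideanSpace ℝ (Fin d))
    (m : Fin N → EuclideanSpace ℝ (Fin n)) :
    |(1 / (N : ℝ)) * ∑ j, Real.exp (-(1 / 2) *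
        ⟪y - F (m j), Matrix.toEuclideanCLM (𝕜 := ℝ) Γ⁻¹ (y - F (m j))⟫_ℝ) -
      (1 / (N : ℝ)) * ∑ j, Real.exp (-(1 / 2) *
        ⟪y - Ft (m j), Matrix.toEuclideanCLM (𝕜 := ℝ) Γ⁻¹ (y - Ft (m j))⟫_ℝ)| ≤
    (‖Matrix.toEuclideanCLM (𝕜 := ℝ) Γ⁻¹‖ *
        (2 * ‖y‖ + Real.sqrt ((1 / (N : ℝ)) * ∑ j, ‖F (m j)‖ ^ 2) +
          Real.sqrt ((1 / (N : ℝ)) * ∑ j, ‖Ft (m j)‖ ^ 2))) *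
      Real.sqrt ((1 / (N : ℝ)) * ∑ j, ‖F (m j) - Ft (m j)‖ ^ 2) := by
  set A := Matrix.toEuclideanCLM (𝕜 := ℝ) Γ⁻¹
  set e : Fin N → ℝ := fun j ↦ ‖F (m j) - Ft (m j)‖
  set rms : (Fin N → ℝ) → ℝ := fun f ↦ √(1 / (N : ℝ) * ∑ j, f j ^ 2)
  have hA : ∀ v, 0 ≤ ⟪v, A v⟫_ℝ := hΓpd.posSemidef.inv.inner_toEuclideanCLM_self_nonneg
  have hN : 1 / (N : ℝ) * #(univ : Finset (Fin N)) ≤ 1 := by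
    rw [card_univ, Fintype.card_fin, one_div_mul_eq_div]
    exact div_self_le_one _
  change |1 / (N : ℝ) * ∑ j, gaussianLikelihood A y (F (m j)) -
    1 / (N : ℝ) * ∑ j, gaussianLikelihood A y (Ft (m j))| ≤ _
  calc _ = 1 / (N : ℝ) *
        |∑ j, (gaussianLikelihood A y (F (m j)) - gaussianLikelihood A y (Ft (m j)))| := by
        rw [← mul_sub, ← sum_sub_distrib, abs_mul, abs_of_nonneg (by positivity)]
    _ ≤ 1 / (N : ℝ) * ∑ j, ‖A‖ / 2 * (e j * (2 * ‖y‖ + ‖F (m j)‖ + ‖Ft (m j)‖)) := by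
        gcongr
        exact (abs_sum_le_sum_abs _ _).trans
          (sum_le_sum fun j _ ↦ abs_gaussianLikelihood_sub_le A hA y _ _)
    _ = ‖A‖ / 2 * (1 / (N : ℝ) * ∑ j, e j * (2 * ‖y‖ + ‖F (m j)‖ + ‖Ft (m j)‖)) := by
        rw [← mul_sum]
        ring
    _ ≤ ‖A‖ / 2 * (rms e * (2 * ‖y‖ + rms (‖F <| m ·‖) + rms (‖Ft <| m ·‖))) := by
        refine mul_le_mul_of_nonneg_left ?_ (by positivity)
        exact Real.mul_sum_mul_add_add_le (by positivity) (by positivity) hN _ _ _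
    _ ≤ _ := by
        have : 0 ≤ ‖A‖ * (rms e * (2 * ‖y‖ + rms (‖F <| m ·‖) + rms (‖Ft <| m ·‖))) := by
          simp only [rms]
          positivity
        linarith

theorem evidence_estimator_error_bound (n d N : ℕ) (hN : 0 < N)
    (Γ : Matrix (Fin d) (Fin d) ℝ) (hΓsymm : Γ.IsSymm) (hΓpd : Γ.PosDef)
    (y : EuclideanSpace ℝ (Fin d))
    (F Ft : EuclideanSpace ℝ (Fin n) → EuclideanSpace ℝ (Fin d))
    (m : Fin N → EuclideanSpace ℝ (Fin n)) :
    |(1 / (N : ℝ)) * ∑ j, Real.exp (-(1 / 2) *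
        ⟪y - F (m j), Matrix.toEuclideanCLM (𝕜 := ℝ) Γ⁻¹ (y - F (m j))⟫_ℝ) -
      (1 / (N : ℝ)) * ∑ j, Real.exp (-(1 / 2) *
        ⟪y - Ft (m j), Matrix.toEuclideanCLM (𝕜 := ℝ) Γ⁻¹ (y - Ft (m j))⟫_ℝ)| ≤
    (‖Matrix.toEuclideanCLM (𝕜 := ℝ) Γ⁻¹‖ *
        (2 * ‖y‖ + Real.sqrt ((1 / (N : ℝ)) * ∑ j, ‖F (m j)‖ ^ 2) +
          Real.sqrt ((1 / (N : ℝ)) * ∑ j, ‖Ft (m j)‖ ^ 2))) *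
      Real.sqrt ((1 / (N : ℝ)) * ∑ j, ‖F (m j) - Ft (m j)‖ ^ 2) :=
  evidence_estimator_error_bound_general n d N Γ hΓpd y F Ft m
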